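/- Let μ be a probability distribution on S and suppose that for each 1 ≤ ℓ ≤ K the coefficient c_ℓ ∈ [0,1] satisfies both: (i) for all k with ℓ < k ≤ K and all x ∈ S_k with p(x,S_{[0,ℓ]}) > 0, c_ℓ ≤ p(x,S_ℓ) / p(x,S_{[0,ℓ]}); and (ii) c_ℓ · μ(S_{[0,ℓ]}) ≤ μ(S_ℓ). Then the mean hitting time under random initialization satisfies Σ_{x∈S} μ(x) · m(x) ≥ Σ_{ℓ=1}^{K} c_ℓ / p_max(X_ℓ, S_{[0,ℓ−1]}), where p_max(X_ℓ, S_{[0,ℓ−1]}) = max_{x∈S_ℓ} p(x, S_{[0,ℓ−1]}). -/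

import Mathlib

open Finset

/-- A finite state space partitioned into fitness levels `S_0, …, S_K`
(`lev x = k` means `x ∈ S_k`), together with an elitist row-stochastic
transition matrix `p`. -/
structure LevelChain (S : Type*) [Fintype S] where
  /-- the number of non-optimal levels -/
  K : ℕ
  /-- the level of each state -/
  lev : S → ℕ
  one_le_K : 1 ≤ K
  lev_le : ∀ x, lev x ≤ K
  level_nonempty : ∀ k ≤ K, ∃ x, lev x = k
  /-- transition probabilities -/
  p : S → S → ℝ
  p_nonneg : ∀ x y, 0 ≤ p x y
  p_row_sum : ∀ x, ∑ y, p x y = 1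
  elitist : ∀ x y, lev x < lev y → p x y = 0

variable {S : Type*} [Fintype S]

/-- The fitness level `S_k`. -/
def LevelChain.level (c : LevelChain S) (k : ℕ) : Finset S :=
  Finset.univ.filter fun x => c.lev x = k

/-- The union of levels `S_{[i,j]} = S_i ∪ ⋯ ∪ S_j`. -/
def LevelChain.levels (c : LevelChain S) (i j : ℕ) : Finset S :=
  Finset.univ.filter fun x => i ≤ c.lev x ∧ c.lev x ≤ j

/-- `p(x, A) = Σ_{y ∈ A} p(x, y)`. -/
def LevelChain.pSet (c : LevelChain S) (x : S) (A : Finset S) : ℝ :=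
  ∑ y ∈ A, c.p x y

/-- The standing reachability assumption: from every non-optimal state one can
move to a better level with positive probability. -/
def LevelChain.Reachable (c : LevelChain S) : Prop :=
  ∀ k, 1 ≤ k → k ≤ c.K → ∀ x, c.lev x = k → 0 < c.pSet x (c.levels 0 (k - 1))

/-- Conditional transition probability `r(x, S_j)`:
`r(x,S_j) = p(x,S_j)/(1 − p(x,S_k))` for `j ≠ k = lev x`, and `r(x,S_k) = 0`. -/
noncomputable def LevelChain.r (c : LevelChain S) (x : S) (j : ℕ) : ℝ :=
  if j = c.lev x then 0
  else c.pSet x (c.level j) / (1 - c.pSet x (c.level (c.lev x)))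

/-- `r_min(X_k, S_j) = min_{x ∈ S_k} r(x, S_j)`. -/
noncomputable def LevelChain.rmin (c : LevelChain S) (k j : ℕ) : ℝ :=
  sInf ((fun x => c.r x j) '' {x | c.lev x = k})

/-- `r_max(X_k, S_j) = max_{x ∈ S_k} r(x, S_j)`. -/
noncomputable def LevelChain.rmax (c : LevelChain S) (k j : ℕ) : ℝ :=
  sSup ((fun x => c.r x j) '' {x | c.lev x = k})

/-- `m` is the mean hitting time of the optimal level `S_0`. -/
def LevelChain.IsMeanHittingTime (c : LevelChain S) (m : S → ℝ) : Prop :=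
  (∀ x, 0 ≤ m x) ∧
  (∀ x, c.lev x = 0 → m x = 0) ∧
  (∀ x, c.lev x ≠ 0 → m x = 1 + ∑ y, c.p x y * m y)

/-- `mbar` is the mean level-leaving time on `S ∖ S_0`. -/
def LevelChain.IsLevelLeavingTime (c : LevelChain S) (mbar : S → ℝ) : Prop :=
  (∀ x, c.lev x ≠ 0 → 0 ≤ mbar x) ∧
  (∀ x, c.lev x ≠ 0 → mbar x = 1 + ∑ y ∈ c.level (c.lev x), c.p x y * mbar y)

/-- `h ℓ x` is the probability of hitting level `S_ℓ` starting from `x`. -/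
def LevelChain.IsHitProb (c : LevelChain S) (h : ℕ → S → ℝ) : Prop :=
  (∀ ℓ x, 0 ≤ h ℓ x ∧ h ℓ x ≤ 1) ∧
  (∀ ℓ x, c.lev x = ℓ → h ℓ x = 1) ∧
  (∀ ℓ x, c.lev x < ℓ → h ℓ x = 0) ∧
  (∀ ℓ x, ℓ < c.lev x →
    h ℓ x = ∑ y ∈ c.levels ℓ (c.lev x), c.p x y * h ℓ y)

/-!
Write `b_i = 1 / p_max(X_i, S_{[0,i-1]})` and
`Φ_k = levelBound cl b k = Σ_{1 ≤ i < k} c_i b_i + b_k`.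
By induction on `k`, the mean hitting time is at least `Φ_k` on `S_k`: at a minimiser `z` of `m`
on `S_k`, the recursion for `m` gives `p(z, S_{[0,k-1]}) · m(z) ≥ 1 + Σ_{1 ≤ j < k} p(z, S_j) Φ_j`,
and condition (i) is exactly what makes the right-hand side at least `p(z, S_{[0,k-1]}) · Φ_k`.
Averaging `m ≥ Φ_{lev x}` over `μ`, condition (ii) turns `Σ_j μ(S_j) Φ_j` into the claimed sum
by the same summation inequality.
-/

lemma sum_mul_le_sum_mul_of_le {ι : Type*} {s : Finset ι} {w f : ι → ℝ} {t : ℝ}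
    (hw : ∀ i ∈ s, 0 ≤ w i) (hf : ∀ i ∈ s, t ≤ f i) :
    (∑ i ∈ s, w i) * t ≤ ∑ i ∈ s, w i * f i := by
  rw [sum_mul]
  exact sum_le_sum fun i hi => mul_le_mul_of_nonneg_left (hf i hi) (hw i hi)

lemma sum_Ico_one_le_sum_range {f : ℕ → ℝ} (h0 : 0 ≤ f 0) (n : ℕ) :
    ∑ i ∈ Ico 1 n, f i ≤ ∑ i ∈ range n, f i := by
  refine sum_le_sum_of_subset_of_nonneg (fun i hi => mem_range.2 (mem_Ico.1 hi).2)
    fun i hin hi => ?_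
  obtain rfl : i = 0 := by
    simp only [mem_range, mem_Ico, not_and, not_lt] at hin hi
    omega
  exact h0

def levelBound (cl b : ℕ → ℝ) (k : ℕ) : ℝ :=
  ∑ i ∈ Ico 1 k, cl i * b i + b k

lemma sum_range_mul_sum_Ico_le_sum_mul_levelBound {a cl b : ℕ → ℝ} (n : ℕ)
    (hb : ∀ j ∈ Ico 1 n, 0 ≤ b j)
    (ha : ∀ j ∈ Ico 1 n, cl j * ∑ i ∈ range (j + 1), a i ≤ a j) :
    (∑ i ∈ range n, a i) * ∑ j ∈ Ico 1 n, cl j * b j ≤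
      ∑ j ∈ Ico 1 n, a j * levelBound cl b j := by
  induction n with
  | zero => simp
  | succ n ih =>
    rcases Nat.eq_zero_or_pos n with rfl | hn
    · simp
    have hmono : Ico 1 n ⊆ Ico 1 (n + 1) := Ico_subset_Ico_right n.le_succ
    have hlast : n ∈ Ico 1 (n + 1) := by simp only [mem_Ico]; omega
    have ih := ih (fun j hj => hb j (hmono hj)) (fun j hj => ha j (hmono hj))
    have hstep := mul_le_mul_of_nonneg_right (ha n hlast) (hb n hlast)
    rw [sum_range_succ] at hstep ⊢
    rw [sum_Ico_succ_top hn, sum_Ico_succ_top hn, levelBound]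
    linarith

namespace LevelChain

variable (c : LevelChain S)

lemma pSet_nonneg (x : S) (A : Finset S) : 0 ≤ c.pSet x A :=
  sum_nonneg fun y _ => c.p_nonneg x y

lemma mem_level {x : S} {k : ℕ} : x ∈ c.level k ↔ c.lev x = k := by
  simp [level]

lemma levels_zero_K_eq_univ : c.levels 0 c.K = univ := by
  ext x
  simp [levels, c.lev_le x]

lemma sum_levels_zero_eq_sum_range (f : S → ℝ) (n : ℕ) :
    ∑ y ∈ c.levels 0 n, f y = ∑ i ∈ range (n + 1), ∑ y ∈ c.level i, f y := by
  simp only [level]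
  rw [sum_fiberwise_eq_sum_filter]
  refine sum_congr (filter_congr fun x _ => ?_) fun _ _ => rfl
  simp only [mem_range]
  omega

lemma sum_levels_lev_mul_eq_sum (x : S) (g : S → ℝ) :
    ∑ y ∈ c.levels 0 (c.lev x), c.p x y * g y = ∑ y, c.p x y * g y := by
  refine sum_subset (subset_univ _) fun y _ hy => ?_
  rw [c.elitist x y (by simp [levels] at hy; omega), zero_mul]

lemma pSet_levels_lev (x : S) : c.pSet x (c.levels 0 (c.lev x)) = 1 := by
  simpa [pSet, c.p_row_sum] using c.sum_levels_lev_mul_eq_sum x fun _ => 1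

noncomputable def pmax (ℓ : ℕ) : ℝ :=
  sSup ((fun x => c.pSet x (c.levels 0 (ℓ - 1))) '' {x | c.lev x = ℓ})

lemma pSet_le_pmax (x : S) : c.pSet x (c.levels 0 (c.lev x - 1)) ≤ c.pmax (c.lev x) :=
  le_csSup (Set.toFinite _).bddAbove ⟨x, rfl, rfl⟩

lemma pmax_nonneg (ℓ : ℕ) : 0 ≤ c.pmax ℓ :=
  Real.sSup_nonneg fun _ ⟨_, _, hx⟩ => hx ▸ c.pSet_nonneg _ _

lemma mul_pSet_levels_le_pSet_level {cl : ℕ → ℝ}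
    (hcond1 : ∀ ℓ, 1 ≤ ℓ → ℓ ≤ c.K → ∀ k, ℓ < k → k ≤ c.K → ∀ x, c.lev x = k →
      0 < c.pSet x (c.levels 0 ℓ) →
      cl ℓ ≤ c.pSet x (c.level ℓ) / c.pSet x (c.levels 0 ℓ))
    {x : S} {j : ℕ} (hj : 1 ≤ j) (hjx : j < c.lev x) :
    cl j * c.pSet x (c.levels 0 j) ≤ c.pSet x (c.level j) := by
  rcases (c.pSet_nonneg x (c.levels 0 j)).eq_or_lt with hzero | hpos
  · rw [← hzero, mul_zero]
    exact c.pSet_nonneg x _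
  · have hK := c.lev_le x
    exact (le_div_iff₀ hpos).1 (hcond1 j hj (by omega) _ hjx hK x rfl hpos)

variable {c} {m : S → ℝ}

lemma one_add_sum_le_pSet_mul_of_forall_le (hm : c.IsMeanHittingTime m) {z : S} {n : ℕ}
    (hz : c.lev z = n + 1) (hmin : ∀ y ∈ c.level (n + 1), m z ≤ m y) :
    1 + ∑ j ∈ Ico 1 (n + 1), ∑ y ∈ c.level j, c.p z y * m y ≤
      c.pSet z (c.levels 0 n) * m z := by
  have hrec : m z = 1 + ∑ j ∈ range (n + 1), ∑ y ∈ c.level j, c.p z y * m y +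
      ∑ y ∈ c.level (n + 1), c.p z y * m y := by
    rw [hm.2.2 z (by omega), ← c.sum_levels_lev_mul_eq_sum, hz, sum_levels_zero_eq_sum_range,
      sum_range_succ, add_assoc]
  have hlower := sum_Ico_one_le_sum_range (f := fun j => ∑ y ∈ c.level j, c.p z y * m y)
    (sum_nonneg fun y _ => mul_nonneg (c.p_nonneg z y) (hm.1 y)) (n + 1)
  have htop : c.pSet z (c.level (n + 1)) * m z ≤ ∑ y ∈ c.level (n + 1), c.p z y * m y :=
    sum_mul_le_sum_mul_of_le (fun y _ => c.p_nonneg z y) hmin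
  have hsplit : c.pSet z (c.levels 0 n) = 1 - c.pSet z (c.level (n + 1)) := by
    have htotal := c.pSet_levels_lev z
    rw [hz, pSet, sum_levels_zero_eq_sum_range, sum_range_succ] at htotal
    rw [pSet, sum_levels_zero_eq_sum_range, ← htotal, pSet]
    ring
  rw [hsplit]
  linarith

theorem levelBound_le_of_isMeanHittingTime (hreach : c.Reachable) (hm : c.IsMeanHittingTime m)
    {cl : ℕ → ℝ}
    (hcl : ∀ x j, 1 ≤ j → j < c.lev x → cl j * c.pSet x (c.levels 0 j) ≤ c.pSet x (c.level j))
    (x : S) (hx : 1 ≤ c.lev x) :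
    levelBound cl (fun ℓ => (c.pmax ℓ)⁻¹) (c.lev x) ≤ m x := by
  induction hk : c.lev x using Nat.strong_induction_on generalizing x with
  | _ k ih =>
  obtain ⟨n, rfl⟩ : ∃ n, k = n + 1 := ⟨k - 1, by omega⟩
  obtain ⟨z, hzmem, hmin⟩ := (c.level (n + 1)).exists_min_image m ⟨x, c.mem_level.2 hk⟩
  have hz := c.mem_level.1 hzmem
  refine le_trans ?_ (hmin x (c.mem_level.2 hk))
  have hq : 0 < c.pSet z (c.levels 0 n) := by
    simpa using hreach (n + 1) (by omega) (hz ▸ c.lev_le z) z hz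
  have hsum : c.pSet z (c.levels 0 n) * ∑ j ∈ Ico 1 (n + 1), cl j * (c.pmax j)⁻¹ ≤
      ∑ j ∈ Ico 1 (n + 1), c.pSet z (c.level j) *
        levelBound cl (fun ℓ => (c.pmax ℓ)⁻¹) j := by
    rw [pSet, sum_levels_zero_eq_sum_range]
    refine sum_range_mul_sum_Ico_le_sum_mul_levelBound _
      (fun j _ => inv_nonneg.2 (c.pmax_nonneg j)) fun j hj => ?_
    rw [← sum_levels_zero_eq_sum_range]
    exact hcl z j (mem_Ico.1 hj).1 (hz ▸ (mem_Ico.1 hj).2)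
  have hlast : c.pSet z (c.levels 0 n) * (c.pmax (n + 1))⁻¹ ≤ 1 := by
    simpa [hz] using mul_inv_le_one_of_le₀ (c.pSet_le_pmax z) (c.pmax_nonneg _)
  have hlower : ∑ j ∈ Ico 1 (n + 1), c.pSet z (c.level j) *
        levelBound cl (fun ℓ => (c.pmax ℓ)⁻¹) j ≤
      ∑ j ∈ Ico 1 (n + 1), ∑ y ∈ c.level j, c.p z y * m y :=
    sum_le_sum fun j hj => sum_mul_le_sum_mul_of_le (fun y _ => c.p_nonneg z y)
      fun y hy => by
        obtain rfl := c.mem_level.1 hy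
        exact ih _ (mem_Ico.1 hj).2 y (mem_Ico.1 hj).1 rfl
  have hrec := one_add_sum_le_pSet_mul_of_forall_le hm hz hmin
  refine le_of_mul_le_mul_left ?_ hq
  rw [levelBound, mul_add]
  linarith

end LevelChain

theorem random_init_lower_bound_general
    (c : LevelChain S) (hreach : c.Reachable)
    (m : S → ℝ) (hm : c.IsMeanHittingTime m)
    (μ : S → ℝ) (hμ0 : ∀ x, 0 ≤ μ x) (hμ1 : ∑ x, μ x = 1)
    (cl : ℕ → ℝ)
    (hcond1 : ∀ ℓ, 1 ≤ ℓ → ℓ ≤ c.K → ∀ k, ℓ < k → k ≤ c.K → ∀ x, c.lev x = k →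
      0 < c.pSet x (c.levels 0 ℓ) →
      cl ℓ ≤ c.pSet x (c.level ℓ) / c.pSet x (c.levels 0 ℓ))
    (hcond2 : ∀ ℓ, 1 ≤ ℓ → ℓ ≤ c.K →
      cl ℓ * (∑ x ∈ c.levels 0 ℓ, μ x) ≤ ∑ x ∈ c.level ℓ, μ x) :
    ∑ x, μ x * m x ≥ ∑ ℓ ∈ Finset.Icc 1 c.K,
      cl ℓ / sSup ((fun x => c.pSet x (c.levels 0 (ℓ - 1))) '' {x | c.lev x = ℓ}) := by
  have hpointwise := c.levelBound_le_of_isMeanHittingTime hreach hm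
    fun x j hj hjx => c.mul_pSet_levels_le_pSet_level hcond1 hj hjx
  have hsum := sum_range_mul_sum_Ico_le_sum_mul_levelBound (a := fun j => ∑ x ∈ c.level j, μ x)
    (cl := cl) (b := fun ℓ => (c.pmax ℓ)⁻¹) (c.K + 1)
    (fun j _ => inv_nonneg.2 (c.pmax_nonneg j)) fun j hj => by
      rw [← c.sum_levels_zero_eq_sum_range]
      exact hcond2 j (mem_Ico.1 hj).1 (Nat.le_of_lt_succ (mem_Ico.1 hj).2)
  rw [← c.sum_levels_zero_eq_sum_range, c.levels_zero_K_eq_univ, hμ1, one_mul,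
    Ico_add_one_right_eq_Icc] at hsum
  calc ∑ ℓ ∈ Icc 1 c.K, cl ℓ / c.pmax ℓ
      ≤ ∑ j ∈ Icc 1 c.K, (∑ x ∈ c.level j, μ x) * levelBound cl (fun ℓ => (c.pmax ℓ)⁻¹) j := by
        simpa only [div_eq_mul_inv] using hsum
    _ ≤ ∑ j ∈ Icc 1 c.K, ∑ x ∈ c.level j, μ x * m x :=
        sum_le_sum fun j hj => sum_mul_le_sum_mul_of_le (fun x _ => hμ0 x) fun x hx => by
          obtain rfl := c.mem_level.1 hx
          exact hpointwise x (mem_Icc.1 hj).1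
    _ ≤ ∑ j ∈ range (c.K + 1), ∑ x ∈ c.level j, μ x * m x := by
        rw [← Ico_add_one_right_eq_Icc]
        exact sum_Ico_one_le_sum_range (sum_nonneg fun x _ => mul_nonneg (hμ0 x) (hm.1 x)) _
    _ = ∑ x, μ x * m x := by rw [← c.sum_levels_zero_eq_sum_range, c.levels_zero_K_eq_univ]

/-- Type-`c_ℓ` lower bound under random initialization `μ`:
if each `c_ℓ ∈ [0,1]` satisfies
(i) `c_ℓ ≤ p(x,S_ℓ)/p(x,S_{[0,ℓ]})` for all `ℓ < k ≤ K` and `x ∈ S_k` with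
`p(x,S_{[0,ℓ]}) > 0`, and (ii) `c_ℓ·μ(S_{[0,ℓ]}) ≤ μ(S_ℓ)`, then
`Σ_x μ(x)·m(x) ≥ Σ_{ℓ=1}^{K} c_ℓ / p_max(X_ℓ, S_{[0,ℓ−1]})`. -/
theorem random_init_lower_bound
    (c : LevelChain S) (hreach : c.Reachable)
    (m : S → ℝ) (hm : c.IsMeanHittingTime m)
    (μ : S → ℝ) (hμ0 : ∀ x, 0 ≤ μ x) (hμ1 : ∑ x, μ x = 1)
    (cl : ℕ → ℝ)
    (hcl01 : ∀ ℓ, 1 ≤ ℓ → ℓ ≤ c.K → 0 ≤ cl ℓ ∧ cl ℓ ≤ 1)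
    (hcond1 : ∀ ℓ, 1 ≤ ℓ → ℓ ≤ c.K → ∀ k, ℓ < k → k ≤ c.K → ∀ x, c.lev x = k →
      0 < c.pSet x (c.levels 0 ℓ) →
      cl ℓ ≤ c.pSet x (c.level ℓ) / c.pSet x (c.levels 0 ℓ))
    (hcond2 : ∀ ℓ, 1 ≤ ℓ → ℓ ≤ c.K →
      cl ℓ * (∑ x ∈ c.levels 0 ℓ, μ x) ≤ ∑ x ∈ c.level ℓ, μ x) :
    ∑ x, μ x * m x ≥ ∑ ℓ ∈ Finset.Icc 1 c.K,
      cl ℓ / sSup ((fun x => c.pSet x (c.levels 0 (ℓ - 1))) '' {x | c.lev x = ℓ}) :=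
  random_init_lower_bound_general c hreach m hm μ hμ0 hμ1 cl hcond1 hcond2
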